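/- Let $\varphi \in L^1(\mathbb{R})$ be a scalar function whose Fourier transform $\mathcal{F}\varphi(\xi) = \int_{\mathbb{R}} e^{-i\xi t}\varphi(t)\,dt$ vanishes on an open neighborhood $U$ of a closed set $E \subset \mathbb{R}$. Then the Carleman transform $\hat\varphi$ of $\varphi$ extends holomorphically across $iE$; i.e., for each $\xi_0 \in E$ there is a neighborhood of $i\xi_0$ in $\mathbb{C}$ to which $\hat\varphi$ (defined on $\mathrm{Re}\,\lambda \ne 0$) extends holomorphically. -/

import Mathlib

open MeasureTheory Set Filter Complex

noncomputable def Fp (φ : ℝ → ℂ) (l : ℂ) : ℂ := ∫ η in Set.Ici (0:ℝ), Complex.exp (-l * η) * φ η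
noncomputable def Fm (φ : ℝ → ℂ) (l : ℂ) : ℂ := -∫ η in Set.Iic (0:ℝ), Complex.exp (-l * η) * φ η

lemma meas_aux (φ : ℝ → ℂ) (hφ : Integrable φ) (l : ℂ) (s : Set ℝ) :
    AEStronglyMeasurable (fun η : ℝ => Complex.exp (-l * η) * φ η) (volume.restrict s) :=
  ((Complex.continuous_exp.comp (by continuity : Continuous fun η : ℝ => -l * η)).aestronglyMeasurable).mul
    (hφ.aestronglyMeasurable.restrict)

lemma Fp_contOn (φ : ℝ → ℂ) (hφ : Integrable φ) :
    ContinuousOn (Fp φ) {l : ℂ | 0 ≤ l.re} := by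
  intro l₀ hl₀
  apply MeasureTheory.continuousWithinAt_of_dominated
    (bound := fun η => ‖φ η‖)
  · exact Filter.Eventually.of_forall fun l => meas_aux φ hφ l _
  · refine eventually_nhdsWithin_of_forall (fun l hl => ?_)
    refine (ae_restrict_iff' measurableSet_Ici).2 (Filter.Eventually.of_forall fun η hη => ?_)
    rw [norm_mul, Complex.norm_exp]
    have : (-l * η).re = -(l.re * η) := by simp [Complex.mul_re]
    rw [this]
    have h1 : Real.exp (-(l.re * η)) ≤ 1 := by
      rw [Real.exp_le_one_iff]
      exact neg_nonpos.2 (mul_nonneg hl hη)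
    nlinarith [norm_nonneg (φ η), Real.exp_pos (-(l.re * η))]
  · exact hφ.norm.restrict
  · refine Filter.Eventually.of_forall fun η => ?_
    exact (Continuous.continuousWithinAt (by continuity)).mono (fun x hx => trivial)

lemma exp_bound_aux {c η : ℝ} (hc : 0 < c) (hη : 0 ≤ η) : η * Real.exp (-(c*η)) ≤ 1/c := by
  rw [Real.exp_neg, ← Real.exp_neg]
  have h := Real.add_one_le_exp (c*η)
  have h2 := Real.exp_pos (c*η)
  rw [Real.exp_neg, ← div_eq_mul_inv, div_le_div_iff₀ h2 hc]
  nlinarith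

lemma Fp_int (φ : ℝ → ℂ) (hφ : Integrable φ) {l : ℂ} (hl : 0 ≤ l.re) :
    IntegrableOn (fun η : ℝ => Complex.exp (-l * η) * φ η) (Set.Ici 0) := by
  refine Integrable.mono hφ.restrict (meas_aux φ hφ l _) ?_
  refine (ae_restrict_iff' measurableSet_Ici).2 (Filter.Eventually.of_forall fun η hη => ?_)
  rw [norm_mul, Complex.norm_exp]
  have : (-l * η).re = -(l.re * η) := by simp [Complex.mul_re]
  rw [this]
  have h1 : Real.exp (-(l.re * η)) ≤ 1 := by
    rw [Real.exp_le_one_iff]; exact neg_nonpos.2 (mul_nonneg hl hη)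
  nlinarith [norm_nonneg (φ η), Real.exp_pos (-(l.re * η))]

lemma Fp_diff (φ : ℝ → ℂ) (hφ : Integrable φ) {l₀ : ℂ} (hl₀ : 0 < l₀.re) :
    DifferentiableAt ℂ (Fp φ) l₀ := by
  set ε := l₀.re / 2 with hε
  have hεpos : 0 < ε := by positivity
  have key := hasDerivAt_integral_of_dominated_loc_of_deriv_le (μ := volume.restrict (Set.Ici (0:ℝ)))
    (F := fun l η => Complex.exp (-l * η) * φ η)
    (F' := fun l η => Complex.exp (-l * η) * (-1 * η) * φ η)
    (x₀ := l₀) (bound := fun η => (1/ε) * ‖φ η‖) (Metric.ball_mem_nhds l₀ hεpos)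
    (Filter.Eventually.of_forall fun l => meas_aux φ hφ l _)
    (Fp_int φ hφ hl₀.le)
    (((Complex.continuous_exp.comp (by continuity : Continuous fun η:ℝ => -l₀*η)).mul
      (by continuity : Continuous fun η:ℝ => (-1 * η : ℂ))).aestronglyMeasurable.mul
      hφ.aestronglyMeasurable.restrict)
    ?_ (hφ.norm.restrict.const_mul _) ?_
  · exact ⟨_, key.2⟩
  · refine (ae_restrict_iff' measurableSet_Ici).2 (Filter.Eventually.of_forall fun η hη l hl => ?_)
    rw [Set.mem_Ici] at hη
    have hlre : ε ≤ l.re := by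
      have h1 := Complex.abs_re_le_norm (l - l₀)
      simp only [Complex.sub_re] at h1
      have h2 : ‖l - l₀‖ < ε := by simpa [Metric.mem_ball, Complex.dist_eq] using hl
      have h3 := (abs_le.1 (le_of_lt (lt_of_le_of_lt h1 h2))).1
      linarith
    rw [norm_mul, norm_mul, Complex.norm_exp]
    have hre : (-l * η).re = -(l.re * η) := by simp [Complex.mul_re]
    rw [hre]
    have h3 : ‖(-1 * (η:ℂ))‖ = η := by
      simp [norm_neg, Complex.norm_real, _root_.abs_of_nonneg hη]
    rw [h3]
    have h4 : Real.exp (-(l.re * η)) ≤ Real.exp (-(ε * η)) := by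
      apply Real.exp_le_exp.2
      have : ε * η ≤ l.re * η := mul_le_mul_of_nonneg_right hlre hη
      linarith
    have h5 : η * Real.exp (-(ε*η)) ≤ 1/ε := exp_bound_aux hεpos hη
    have := norm_nonneg (φ η)
    have h6 : Real.exp (-(l.re*η)) * η ≤ 1/ε := by
      calc Real.exp (-(l.re*η)) * η ≤ Real.exp (-(ε*η)) * η := by
            nlinarith [Real.exp_pos (-(l.re*η)), Real.exp_pos (-(ε*η))]
        _ ≤ 1/ε := by linarith [h5, mul_comm (Real.exp (-(ε*η))) η]
    nlinarith [Real.exp_pos (-(l.re*η)), mul_nonneg (Real.exp_pos (-(l.re*η))).le hη]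
  · refine (ae_restrict_iff' measurableSet_Ici).2 (Filter.Eventually.of_forall fun η _ l _ => ?_)
    have h := (((hasDerivAt_id l).neg.mul_const (η:ℂ)).cexp).mul_const (φ η)
    exact h

lemma phi_neg_int (φ : ℝ → ℂ) (hφ : Integrable φ) : Integrable (fun u : ℝ => φ (-u)) := by
  have A : MeasurePreserving (fun x : ℝ => -x) volume volume :=
    ⟨measurable_neg, Measure.map_neg_eq_self _⟩
  exact (A.integrable_comp_emb (Homeomorph.neg ℝ).isClosedEmbedding.measurableEmbedding).2 hφ

lemma Fm_eq (φ : ℝ → ℂ) (l : ℂ) : Fm φ l = -(Fp (fun u => φ (-u)) (-l)) := by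
  unfold Fm Fp
  congr 1
  rw [MeasureTheory.integral_Ici_eq_integral_Ioi]
  have h := _root_.integral_comp_neg_Iic (0:ℝ) (fun u => Complex.exp (l * u) * φ (-u))
  simp only [neg_zero, neg_neg] at h
  calc ∫ (η : ℝ) in Iic 0, cexp (-l * ↑η) * φ η
      = ∫ (x : ℝ) in Iic 0, cexp (l * ↑(-x)) * φ x := by
        congr 1 with η; push_cast; ring_nf
    _ = ∫ (x : ℝ) in Ioi 0, cexp (l * ↑x) * φ (-x) := h
    _ = ∫ (t : ℝ) in Ioi 0, cexp (- -l * ↑t) * (fun u => φ (-u)) t := by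
        congr 1 with t; push_cast; ring_nf

lemma Fm_contOn (φ : ℝ → ℂ) (hφ : Integrable φ) :
    ContinuousOn (Fm φ) {l : ℂ | l.re ≤ 0} := by
  have h := ((Fp_contOn _ (phi_neg_int φ hφ)).comp (continuous_neg.continuousOn)
    (fun l (hl : l.re ≤ 0) => by simpa using hl)).neg
  exact h.congr (fun l hl => Fm_eq φ l)

lemma Fm_diff (φ : ℝ → ℂ) (hφ : Integrable φ) {l₀ : ℂ} (hl₀ : l₀.re < 0) :
    DifferentiableAt ℂ (Fm φ) l₀ := by
  have h := ((Fp_diff _ (phi_neg_int φ hφ) (by simpa using hl₀)).comp l₀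
    (differentiable_neg l₀)).neg
  have he : ∀ l, Fm φ l = -(Fp (fun u => φ (-u)) (-l)) := Fm_eq φ
  exact h.congr_of_eventuallyEq (Filter.Eventually.of_forall fun l => he l)

lemma axis_eq (φ : ℝ → ℂ) (hφ : Integrable φ) (U : Set ℝ)
    (hvanish : ∀ ξ ∈ U, ∫ t : ℝ, Complex.exp (-(Complex.I * (ξ : ℂ) * (t : ℂ))) * φ t = 0)
    {s : ℝ} (hs : s ∈ U) : Fp φ (Complex.I * s) = Fm φ (Complex.I * s) := by
  unfold Fp Fm
  have hint : Integrable (fun t : ℝ => Complex.exp (-(Complex.I * s) * t) * φ t) := by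
    refine hφ.mono (meas_aux φ hφ _ Set.univ |>.mono_measure (by simp [Measure.restrict_univ]))
      (Filter.Eventually.of_forall fun t => ?_)
    rw [norm_mul, Complex.norm_exp]
    have : (-(Complex.I * s) * t).re = 0 := by simp [Complex.mul_re]
    simp [this]
  have key := hvanish s hs
  have hsplit : (∫ η in Set.Iic (0:ℝ), Complex.exp (-(Complex.I * s) * η) * φ η)
      + (∫ η in Set.Ioi (0:ℝ), Complex.exp (-(Complex.I * s) * η) * φ η)
      = ∫ t : ℝ, Complex.exp (-(Complex.I * s) * t) * φ t :=
    intervalIntegral.integral_Iic_add_Ioi hint.integrableOn hint.integrableOn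
  have hkey2 : (∫ t : ℝ, Complex.exp (-(Complex.I * s) * t) * φ t) = 0 := by
    rw [← key]; congr 1 with t; ring_nf
  rw [MeasureTheory.integral_Ici_eq_integral_Ioi]
  have := hsplit.trans hkey2
  linear_combination this

noncomputable def G (φ : ℝ → ℂ) (l : ℂ) : ℂ := if 0 ≤ l.re then Fp φ l else Fm φ l

lemma G_eq_Fp (φ : ℝ → ℂ) {l : ℂ} (h : 0 ≤ l.re) : G φ l = Fp φ l := if_pos h
lemma G_eq_Fm (φ : ℝ → ℂ) {l : ℂ} (h : l.re < 0) : G φ l = Fm φ l := if_neg (not_le.2 h)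

lemma axis_z (z : ℂ) (h : z.re = 0) : z = Complex.I * z.im := by
  apply Complex.ext <;> simp [h]

lemma G_axis (φ : ℝ → ℂ) (ξ₀ δ : ℝ)
    (haxis : ∀ s ∈ Metric.ball ξ₀ δ, Fp φ (Complex.I * s) = Fm φ (Complex.I * s))
    {c : ℝ} (hc : c ∈ Metric.ball ξ₀ δ) {x : ℝ} (hx : x ≤ 0) :
    G φ ((x : ℂ) + (c : ℂ) * Complex.I) = Fm φ ((x : ℂ) + (c : ℂ) * Complex.I) := by
  have hre : ((x : ℂ) + (c : ℂ) * Complex.I).re = x := by simp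
  rcases lt_or_eq_of_le hx with h | h
  · exact G_eq_Fm φ (by rw [hre]; exact h)
  · subst h
    have hz : (((0:ℝ) : ℂ) + (c : ℂ) * Complex.I) = Complex.I * (c : ℂ) := by
      push_cast; ring
    rw [G_eq_Fp φ (by rw [hre]), hz]
    exact haxis c hc

lemma G_contOn (φ : ℝ → ℂ) (hφ : Integrable φ) (ξ₀ δ : ℝ)
    (haxis : ∀ s ∈ Metric.ball ξ₀ δ, Fp φ (Complex.I * s) = Fm φ (Complex.I * s)) :
    ContinuousOn (G φ) {z : ℂ | z.im ∈ Metric.ball ξ₀ δ} := by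
  intro z hz
  rcases lt_trichotomy z.re 0 with h | h | h
  · have hnb : {l : ℂ | l.re < 0} ∈ nhds z := by
      exact (isOpen_lt (by continuity) continuous_const).mem_nhds h
    have hFm : ContinuousAt (Fm φ) z :=
      (Fm_contOn φ hφ z h.le).continuousAt
        (mem_of_superset hnb (fun w (hw : w.re < 0) => (le_of_lt hw : w.re ≤ 0)))
    have : ContinuousAt (G φ) z := by
      refine hFm.congr (Filter.eventuallyEq_of_mem hnb fun w (hw : w.re < 0) => ?_).symm
      exact G_eq_Fm φ hw
    exact this.continuousWithinAt
  · have him : z.im ∈ Metric.ball ξ₀ δ := hz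
    have hzI : z = Complex.I * z.im := axis_z z h
    have hGz : G φ z = Fp φ z := G_eq_Fp φ (le_of_eq h.symm)
    have hGz' : G φ z = Fm φ z := by
      rw [hGz, hzI]; exact haxis z.im him
    have h1 : ContinuousWithinAt (G φ) {l : ℂ | 0 ≤ l.re} z :=
      ((Fp_contOn φ hφ) z (le_of_eq h.symm)).congr
        (fun w (hw : 0 ≤ w.re) => G_eq_Fp φ hw) hGz
    have h2 : ContinuousWithinAt (G φ) {l : ℂ | l.re < 0} z :=
      (((Fm_contOn φ hφ) z (le_of_eq h)).mono
          (fun w (hw : w.re < 0) => (le_of_lt hw : w.re ≤ 0))).congr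
        (fun w (hw : w.re < 0) => G_eq_Fm φ hw) hGz'
    have h3 := h1.union h2
    have huniv : {l : ℂ | 0 ≤ l.re} ∪ {l : ℂ | l.re < 0} = Set.univ := by
      ext w; simp [le_or_gt]
    rw [huniv] at h3
    exact h3.mono (Set.subset_univ _)
  · have hnb : {l : ℂ | 0 < l.re} ∈ nhds z := by
      exact (isOpen_lt continuous_const (by continuity)).mem_nhds h
    have hFp : ContinuousAt (Fp φ) z :=
      (Fp_contOn φ hφ z h.le).continuousAt
        (mem_of_superset hnb (fun w (hw : 0 < w.re) => (le_of_lt hw : 0 ≤ w.re)))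
    have : ContinuousAt (G φ) z := by
      refine hFp.congr (Filter.eventuallyEq_of_mem hnb fun w (hw : 0 < w.re) => ?_).symm
      exact G_eq_Fp φ (le_of_lt hw)
    exact this.continuousWithinAt

lemma rect_zero (φ : ℝ → ℂ) (hφ : Integrable φ) (ξ₀ δ : ℝ) (hδ : 0 < δ)
    (haxis : ∀ s ∈ Metric.ball ξ₀ δ, Fp φ (Complex.I * s) = Fm φ (Complex.I * s))
    {z : ℂ} (hz : z.im ∈ Metric.ball ξ₀ δ) :
    (∫ x : ℝ in (0:ℝ)..z.re, G φ ((x:ℂ) + (ξ₀:ℂ) * Complex.I))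
      - (∫ x : ℝ in (0:ℝ)..z.re, G φ ((x:ℂ) + (z.im:ℂ) * Complex.I))
      + Complex.I • (∫ y : ℝ in ξ₀..z.im, G φ ((z.re:ℂ) + (y:ℂ) * Complex.I))
      - Complex.I • (∫ y : ℝ in ξ₀..z.im, G φ (((0:ℝ):ℂ) + (y:ℂ) * Complex.I)) = 0 := by
  have hξ₀ : ξ₀ ∈ Metric.ball ξ₀ δ := Metric.mem_ball_self hδ
  have hc₀re : ((ξ₀:ℂ) * Complex.I).re = (0:ℝ) := by simp
  have hc₀im : ((ξ₀:ℂ) * Complex.I).im = ξ₀ := by simp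
  rcases le_total 0 z.re with h | h
  · -- right half-plane: use Fp
    have key := Complex.integral_boundary_rect_eq_zero_of_continuousOn_of_differentiableOn
      (Fp φ) ((ξ₀:ℂ) * Complex.I) z
      (by
        rw [hc₀re, hc₀im]
        refine (Fp_contOn φ hφ).mono (fun w hw => ?_)
        have h1 : w.re ∈ Set.uIcc (0:ℝ) z.re := hw.1
        rw [Set.uIcc_of_le h] at h1
        exact h1.1)
      (by
        rw [hc₀re, hc₀im]
        intro w hw
        have h1 : w.re ∈ Set.Ioo (min (0:ℝ) z.re) (max (0:ℝ) z.re) := hw.1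
        rw [min_eq_left h] at h1
        exact (Fp_diff φ hφ h1.1).differentiableWithinAt)
    rw [hc₀re, hc₀im] at key
    have e1 : ∀ c : ℝ, (∫ x : ℝ in (0:ℝ)..z.re, G φ ((x:ℂ) + (c:ℂ) * Complex.I))
        = ∫ x : ℝ in (0:ℝ)..z.re, Fp φ ((x:ℂ) + (c:ℂ) * Complex.I) := by
      intro c
      refine intervalIntegral.integral_congr (fun x hx => ?_)
      rw [Set.uIcc_of_le h] at hx
      exact G_eq_Fp φ (by simpa using hx.1)
    have e2 : ∀ a : ℝ, 0 ≤ a → (∫ y : ℝ in ξ₀..z.im, G φ ((a:ℂ) + (y:ℂ) * Complex.I))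
        = ∫ y : ℝ in ξ₀..z.im, Fp φ ((a:ℂ) + (y:ℂ) * Complex.I) := by
      intro a ha
      refine intervalIntegral.integral_congr (fun y hy => ?_)
      exact G_eq_Fp φ (by simpa using ha)
    calc _ = (∫ x : ℝ in (0:ℝ)..z.re, Fp φ ((x:ℂ) + (ξ₀:ℂ) * Complex.I))
          - (∫ x : ℝ in (0:ℝ)..z.re, Fp φ ((x:ℂ) + (z.im:ℂ) * Complex.I))
          + Complex.I • (∫ y : ℝ in ξ₀..z.im, Fp φ ((z.re:ℂ) + (y:ℂ) * Complex.I))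
          - Complex.I • (∫ y : ℝ in ξ₀..z.im, Fp φ (((0:ℝ):ℂ) + (y:ℂ) * Complex.I)) := by
          rw [e1 ξ₀, e1 z.im, e2 z.re h, e2 0 le_rfl]
      _ = 0 := key
  · -- left half-plane: use Fm
    have key := Complex.integral_boundary_rect_eq_zero_of_continuousOn_of_differentiableOn
      (Fm φ) ((ξ₀:ℂ) * Complex.I) z
      (by
        rw [hc₀re, hc₀im]
        refine (Fm_contOn φ hφ).mono (fun w hw => ?_)
        have h1 : w.re ∈ Set.uIcc (0:ℝ) z.re := hw.1
        rw [Set.uIcc_of_ge h] at h1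
        exact h1.2)
      (by
        rw [hc₀re, hc₀im]
        intro w hw
        have h1 : w.re ∈ Set.Ioo (min (0:ℝ) z.re) (max (0:ℝ) z.re) := hw.1
        rw [max_eq_left h] at h1
        exact (Fm_diff φ hφ h1.2).differentiableWithinAt)
    rw [hc₀re, hc₀im] at key
    have hball : Set.uIcc ξ₀ z.im ⊆ Metric.ball ξ₀ δ :=
      (Set.OrdConnected.uIcc_subset (Convex.ordConnected (convex_ball ξ₀ δ)) hξ₀ hz)
    have e1 : ∀ c : ℝ, c ∈ Metric.ball ξ₀ δ →
        (∫ x : ℝ in (0:ℝ)..z.re, G φ ((x:ℂ) + (c:ℂ) * Complex.I))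
        = ∫ x : ℝ in (0:ℝ)..z.re, Fm φ ((x:ℂ) + (c:ℂ) * Complex.I) := by
      intro c hc
      refine intervalIntegral.integral_congr (fun x hx => ?_)
      rw [Set.uIcc_of_ge h] at hx
      exact G_axis φ ξ₀ δ haxis hc hx.2
    have e2 : ∀ a : ℝ, a ≤ 0 → (∫ y : ℝ in ξ₀..z.im, G φ ((a:ℂ) + (y:ℂ) * Complex.I))
        = ∫ y : ℝ in ξ₀..z.im, Fm φ ((a:ℂ) + (y:ℂ) * Complex.I) := by
      intro a ha
      refine intervalIntegral.integral_congr (fun y hy => ?_)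
      exact G_axis φ ξ₀ δ haxis (hball hy) ha
    calc _ = (∫ x : ℝ in (0:ℝ)..z.re, Fm φ ((x:ℂ) + (ξ₀:ℂ) * Complex.I))
          - (∫ x : ℝ in (0:ℝ)..z.re, Fm φ ((x:ℂ) + (z.im:ℂ) * Complex.I))
          + Complex.I • (∫ y : ℝ in ξ₀..z.im, Fm φ ((z.re:ℂ) + (y:ℂ) * Complex.I))
          - Complex.I • (∫ y : ℝ in ξ₀..z.im, Fm φ (((0:ℝ):ℂ) + (y:ℂ) * Complex.I)) := by
          rw [e1 ξ₀ hξ₀, e1 z.im hz, e2 z.re h, e2 0 le_rfl]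
      _ = 0 := key

noncomputable def HH (φ : ℝ → ℂ) (ξ₀ : ℝ) (z : ℂ) : ℂ :=
  (∫ t : ℝ in (0:ℝ)..z.re, G φ ((t:ℂ) + (ξ₀:ℂ) * Complex.I))
  + Complex.I • ∫ s : ℝ in ξ₀..z.im, G φ ((z.re:ℂ) + (s:ℂ) * Complex.I)

lemma horiz_intble (φ : ℝ → ℂ) (hφ : Integrable φ) (ξ₀ δ : ℝ)
    (haxis : ∀ s ∈ Metric.ball ξ₀ δ, Fp φ (Complex.I * s) = Fm φ (Complex.I * s))
    {c : ℝ} (hc : c ∈ Metric.ball ξ₀ δ) (a b : ℝ) :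
    IntervalIntegrable (fun t : ℝ => G φ ((t:ℂ) + (c:ℂ) * Complex.I)) volume a b := by
  apply ContinuousOn.intervalIntegrable
  refine (G_contOn φ hφ ξ₀ δ haxis).comp
    ((Continuous.continuousOn (by continuity))) (fun t _ => ?_)
  simpa [Set.mem_setOf_eq, Metric.mem_ball] using hc

lemma vert_intble (φ : ℝ → ℂ) (hφ : Integrable φ) (ξ₀ δ : ℝ)
    (haxis : ∀ s ∈ Metric.ball ξ₀ δ, Fp φ (Complex.I * s) = Fm φ (Complex.I * s))
    (a : ℝ) {y₁ y₂ : ℝ} (hy : Set.uIcc y₁ y₂ ⊆ Metric.ball ξ₀ δ) :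
    IntervalIntegrable (fun s : ℝ => G φ ((a:ℂ) + (s:ℂ) * Complex.I)) volume y₁ y₂ := by
  apply ContinuousOn.intervalIntegrable
  refine (G_contOn φ hφ ξ₀ δ haxis).comp
    ((Continuous.continuousOn (by continuity))) (fun s hs => ?_)
  simpa [Set.mem_setOf_eq] using hy hs

lemma HH_eq_B (φ : ℝ → ℂ) (hφ : Integrable φ) (ξ₀ δ : ℝ) (hδ : 0 < δ)
    (haxis : ∀ s ∈ Metric.ball ξ₀ δ, Fp φ (Complex.I * s) = Fm φ (Complex.I * s))
    {z : ℂ} (hz : z.im ∈ Metric.ball ξ₀ δ) :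
    HH φ ξ₀ z = (∫ t : ℝ in (0:ℝ)..z.re, G φ ((t:ℂ) + (z.im:ℂ) * Complex.I))
      + Complex.I • ∫ s : ℝ in ξ₀..z.im, G φ (((0:ℝ):ℂ) + (s:ℂ) * Complex.I) := by
  have key := rect_zero φ hφ ξ₀ δ hδ haxis hz
  unfold HH
  rw [smul_eq_mul, smul_eq_mul] at *
  linear_combination key

lemma hasDerivAt_HH (φ : ℝ → ℂ) (hφ : Integrable φ) (ξ₀ δ : ℝ) (hδ : 0 < δ)
    (haxis : ∀ s ∈ Metric.ball ξ₀ δ, Fp φ (Complex.I * s) = Fm φ (Complex.I * s))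
    {z : ℂ} (hz : z.im ∈ Metric.ball ξ₀ δ) :
    HasDerivAt (HH φ ξ₀) (G φ z) z := by
  have hOC := (convex_ball ξ₀ δ).ordConnected
  have hξ₀ : ξ₀ ∈ Metric.ball ξ₀ δ := Metric.mem_ball_self hδ
  have hVopen : IsOpen {w : ℂ | w.im ∈ Metric.ball ξ₀ δ} :=
    Metric.isOpen_ball.preimage Complex.continuous_im
  have hVnhds : {w : ℂ | w.im ∈ Metric.ball ξ₀ δ} ∈ nhds z := hVopen.mem_nhds hz
  -- decomposition of increments
  have hdecomp : ∀ w : ℂ, w.im ∈ Metric.ball ξ₀ δ →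
      HH φ ξ₀ w - HH φ ξ₀ z = (∫ t : ℝ in z.re..w.re, G φ ((t:ℂ) + (w.im:ℂ) * Complex.I))
        + Complex.I • ∫ s : ℝ in z.im..w.im, G φ ((z.re:ℂ) + (s:ℂ) * Complex.I) := by
    intro w hw
    set u : ℂ := (z.re:ℂ) + (w.im:ℂ) * Complex.I with hu
    have hure : u.re = z.re := by simp [hu]
    have huim : u.im = w.im := by simp [hu]
    have h1 := HH_eq_B φ hφ ξ₀ δ hδ haxis hw
    have h2 := HH_eq_B φ hφ ξ₀ δ hδ haxis (z := u) (by rw [huim]; exact hw)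
    rw [hure, huim] at h2
    have h3 : HH φ ξ₀ u = (∫ t : ℝ in (0:ℝ)..z.re, G φ ((t:ℂ) + (ξ₀:ℂ) * Complex.I))
        + Complex.I • ∫ s : ℝ in ξ₀..w.im, G φ ((z.re:ℂ) + (s:ℂ) * Complex.I) := by
      unfold HH; rw [hure, huim]
    have hadd1 := intervalIntegral.integral_add_adjacent_intervals
      (horiz_intble φ hφ ξ₀ δ haxis hw 0 z.re) (horiz_intble φ hφ ξ₀ δ haxis hw z.re w.re)
    have hadd2 := intervalIntegral.integral_add_adjacent_intervals
      (vert_intble φ hφ ξ₀ δ haxis z.re (Set.OrdConnected.uIcc_subset hOC hξ₀ hz))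
      (vert_intble φ hφ ξ₀ δ haxis z.re (Set.OrdConnected.uIcc_subset hOC hz hw))
    have h4 : HH φ ξ₀ z = (∫ t : ℝ in (0:ℝ)..z.re, G φ ((t:ℂ) + (ξ₀:ℂ) * Complex.I))
        + Complex.I • ∫ s : ℝ in ξ₀..z.im, G φ ((z.re:ℂ) + (s:ℂ) * Complex.I) := rfl
    have heq := h3.symm.trans h2
    rw [h1, h4]
    simp only [smul_eq_mul] at heq ⊢
    linear_combination -hadd1 - Complex.I * hadd2 - heq
  rw [hasDerivAt_iff_isLittleO, Asymptotics.isLittleO_iff]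
  intro c hc
  have hcont : ContinuousAt (G φ) z := (G_contOn φ hφ ξ₀ δ haxis z hz).continuousAt hVnhds
  rcases Metric.continuousAt_iff.1 hcont (c/2) (by positivity) with ⟨ε, hε, hεball⟩
  filter_upwards [hVnhds, Metric.ball_mem_nhds z (half_pos hε)] with w hw hwb
  rw [Metric.mem_ball, Complex.dist_eq] at hwb
  have habs_re : |w.re - z.re| ≤ ‖w - z‖ := by
    simpa [Complex.sub_re] using Complex.abs_re_le_norm (w - z)
  have habs_im : |w.im - z.im| ≤ ‖w - z‖ := by
    simpa [Complex.sub_im] using Complex.abs_im_le_norm (w - z)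
  have hsplit : (w - z) • G φ z = (∫ _t : ℝ in z.re..w.re, G φ z)
      + Complex.I • ∫ _s : ℝ in z.im..w.im, G φ z := by
    rw [intervalIntegral.integral_const, intervalIntegral.integral_const]
    have hwz : w - z = ((w.re - z.re : ℝ) : ℂ) + ((w.im - z.im : ℝ) : ℂ) * Complex.I := by
      apply Complex.ext <;> simp
    simp only [smul_eq_mul, Complex.real_smul]
    rw [hwz]; ring
  have hsub1 : (∫ t : ℝ in z.re..w.re, G φ ((t:ℂ) + (w.im:ℂ) * Complex.I))
      - (∫ _t : ℝ in z.re..w.re, G φ z)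
      = ∫ t : ℝ in z.re..w.re, (G φ ((t:ℂ) + (w.im:ℂ) * Complex.I) - G φ z) :=
    (intervalIntegral.integral_sub (horiz_intble φ hφ ξ₀ δ haxis hw _ _)
      intervalIntegrable_const).symm
  have hsub2 : (∫ s : ℝ in z.im..w.im, G φ ((z.re:ℂ) + (s:ℂ) * Complex.I))
      - (∫ _s : ℝ in z.im..w.im, G φ z)
      = ∫ s : ℝ in z.im..w.im, (G φ ((z.re:ℂ) + (s:ℂ) * Complex.I) - G φ z) :=
    (intervalIntegral.integral_sub
      (vert_intble φ hφ ξ₀ δ haxis z.re (Set.OrdConnected.uIcc_subset hOC hz hw))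
      intervalIntegrable_const).symm
  have hkey : HH φ ξ₀ w - HH φ ξ₀ z - (w - z) • G φ z
      = (∫ t : ℝ in z.re..w.re, (G φ ((t:ℂ) + (w.im:ℂ) * Complex.I) - G φ z))
        + Complex.I • ∫ s : ℝ in z.im..w.im, (G φ ((z.re:ℂ) + (s:ℂ) * Complex.I) - G φ z) := by
    rw [hdecomp w hw, hsplit]
    simp only [smul_eq_mul] at hsub1 hsub2 ⊢
    linear_combination hsub1 + Complex.I * hsub2
  rw [hkey]
  have hb1 : ‖∫ t : ℝ in z.re..w.re, (G φ ((t:ℂ) + (w.im:ℂ) * Complex.I) - G φ z)‖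
      ≤ (c/2) * |w.re - z.re| := by
    apply intervalIntegral.norm_integral_le_of_norm_le_const
    intro t ht
    have ht' : t ∈ Set.Icc (min z.re w.re) (max z.re w.re) :=
      Set.Ioc_subset_Icc_self (by simpa [Set.uIoc] using ht)
    have h1 := ht'.1; have h2 := ht'.2
    have htz : |t - z.re| ≤ |w.re - z.re| := by
      rw [abs_sub_le_iff]
      constructor <;> [skip; skip] <;>
        cases' le_total z.re w.re with hh hh <;>
        simp [min_eq_left, min_eq_right, max_eq_left, max_eq_right, hh] at h1 h2 ⊢ <;>
        cases' abs_cases (w.re - z.re) with hs hs <;> linarith [hs.1]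
    have hdist : dist ((t:ℂ) + (w.im:ℂ) * Complex.I) z < ε := by
      rw [Complex.dist_eq]
      calc ‖(t:ℂ) + (w.im:ℂ) * Complex.I - z‖
          ≤ |((t:ℂ) + (w.im:ℂ) * Complex.I - z).re| + |((t:ℂ) + (w.im:ℂ) * Complex.I - z).im| :=
            Complex.norm_le_abs_re_add_abs_im _
        _ = |t - z.re| + |w.im - z.im| := by simp
        _ < ε := by
            have := htz.trans (habs_re.trans hwb.le)
            have := habs_im.trans hwb.le
            linarith
    have := hεball hdist
    rw [Complex.dist_eq] at this
    exact le_of_lt (by simpa using this)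
  have hb2 : ‖∫ s : ℝ in z.im..w.im, (G φ ((z.re:ℂ) + (s:ℂ) * Complex.I) - G φ z)‖
      ≤ (c/2) * |w.im - z.im| := by
    apply intervalIntegral.norm_integral_le_of_norm_le_const
    intro s hs
    have hs' : s ∈ Set.Icc (min z.im w.im) (max z.im w.im) :=
      Set.Ioc_subset_Icc_self (by simpa [Set.uIoc] using hs)
    have h1 := hs'.1; have h2 := hs'.2
    have hsz : |s - z.im| ≤ |w.im - z.im| := by
      rw [abs_sub_le_iff]
      constructor <;> [skip; skip] <;>
        cases' le_total z.im w.im with hh hh <;>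
        simp [min_eq_left, min_eq_right, max_eq_left, max_eq_right, hh] at h1 h2 ⊢ <;>
        cases' abs_cases (w.im - z.im) with hss hss <;> linarith [hss.1]
    have hdist : dist ((z.re:ℂ) + (s:ℂ) * Complex.I) z < ε := by
      rw [Complex.dist_eq]
      calc ‖(z.re:ℂ) + (s:ℂ) * Complex.I - z‖
          ≤ |((z.re:ℂ) + (s:ℂ) * Complex.I - z).re| + |((z.re:ℂ) + (s:ℂ) * Complex.I - z).im| :=
            Complex.norm_le_abs_re_add_abs_im _
        _ = |s - z.im| := by simp
        _ < ε := by
            have := hsz.trans (habs_im.trans hwb.le)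
            linarith
    have := hεball hdist
    rw [Complex.dist_eq] at this
    exact le_of_lt (by simpa using this)
  calc ‖(∫ t : ℝ in z.re..w.re, (G φ ((t:ℂ) + (w.im:ℂ) * Complex.I) - G φ z))
        + Complex.I • ∫ s : ℝ in z.im..w.im, (G φ ((z.re:ℂ) + (s:ℂ) * Complex.I) - G φ z)‖
      ≤ ‖∫ t : ℝ in z.re..w.re, (G φ ((t:ℂ) + (w.im:ℂ) * Complex.I) - G φ z)‖
        + ‖Complex.I • ∫ s : ℝ in z.im..w.im, (G φ ((z.re:ℂ) + (s:ℂ) * Complex.I) - G φ z)‖ :=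
        norm_add_le _ _
    _ = ‖∫ t : ℝ in z.re..w.re, (G φ ((t:ℂ) + (w.im:ℂ) * Complex.I) - G φ z)‖
        + ‖∫ s : ℝ in z.im..w.im, (G φ ((z.re:ℂ) + (s:ℂ) * Complex.I) - G φ z)‖ := by
        rw [smul_eq_mul, norm_mul, Complex.norm_I, one_mul]
    _ ≤ (c/2) * |w.re - z.re| + (c/2) * |w.im - z.im| := add_le_add hb1 hb2
    _ ≤ (c/2) * ‖w - z‖ + (c/2) * ‖w - z‖ := by
        exact add_le_add (by nlinarith) (by nlinarith)
    _ = c * ‖w - z‖ := by ring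

/-- If the Fourier transform of `φ ∈ L¹(ℝ)` vanishes on an open
neighborhood `U` of a closed set `E ⊆ ℝ`, then the Carleman transform of `φ`
extends holomorphically across `iE`. -/
theorem stmt12 (φ : ℝ → ℂ) (hφ : MeasureTheory.Integrable φ)
    (E : Set ℝ) (hE : IsClosed E) (U : Set ℝ) (hU : IsOpen U) (hEU : E ⊆ U)
    (hvanish : ∀ ξ ∈ U, ∫ t : ℝ, Complex.exp (-(Complex.I * (ξ : ℂ) * (t : ℂ))) * φ t = 0) :
    ∀ ξ₀ ∈ E, ∃ V : Set ℂ, IsOpen V ∧ (Complex.I * (ξ₀ : ℂ)) ∈ V ∧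
      ∃ g : ℂ → ℂ, DifferentiableOn ℂ g V ∧
        ∀ l ∈ V, l.re ≠ 0 →
          g l = if 0 < l.re then ∫ η in Set.Ici (0 : ℝ), Complex.exp (-l * (η : ℂ)) * φ η
                else -∫ η in Set.Iic (0 : ℝ), Complex.exp (-l * (η : ℂ)) * φ η := by
  intro ξ₀ hξ₀E
  obtain ⟨δ, hδ, hδU⟩ := Metric.isOpen_iff.1 hU ξ₀ (hEU hξ₀E)
  have haxis : ∀ s ∈ Metric.ball ξ₀ δ, Fp φ (Complex.I * s) = Fm φ (Complex.I * s) :=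
    fun s hs => axis_eq φ hφ U hvanish (hδU hs)
  refine ⟨{z : ℂ | z.im ∈ Metric.ball ξ₀ δ},
    Metric.isOpen_ball.preimage Complex.continuous_im, ?_, G φ, ?_, ?_⟩
  · have him : (Complex.I * (ξ₀:ℂ)).im = ξ₀ := by simp
    rw [Set.mem_setOf_eq, him]
    exact Metric.mem_ball_self hδ
  · have hVopen : IsOpen {z : ℂ | z.im ∈ Metric.ball ξ₀ δ} :=
      Metric.isOpen_ball.preimage Complex.continuous_im
    have hH : ∀ z ∈ {z : ℂ | z.im ∈ Metric.ball ξ₀ δ}, HasDerivAt (HH φ ξ₀) (G φ z) z :=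
      fun z hz => hasDerivAt_HH φ hφ ξ₀ δ hδ haxis hz
    have hHdiff : DifferentiableOn ℂ (HH φ ξ₀) {z : ℂ | z.im ∈ Metric.ball ξ₀ δ} :=
      fun z hz => (hH z hz).differentiableAt.differentiableWithinAt
    have hderiv : DifferentiableOn ℂ (deriv (HH φ ξ₀)) {z : ℂ | z.im ∈ Metric.ball ξ₀ δ} :=
      ((hHdiff.analyticOnNhd hVopen).deriv).differentiableOn
    exact hderiv.congr (fun z hz => ((hH z hz).deriv).symm)
  · intro l _ hlre
    rcases lt_trichotomy l.re 0 with h | h | h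
    · rw [if_neg (by exact fun hh => absurd (lt_trans h hh) (lt_irrefl _)), G_eq_Fm φ h]
      rfl
    · exact absurd h hlre
    · rw [if_pos h, G_eq_Fp φ h.le]
      rfl
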